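/- Two formulas are alpha-congruent if and only if they have the same normal form under the identity substitution: φ =_α ψ iff φ[ε] = ψ[ε]; moreover φ[ε] =_α φ. -/

import Mathlib

namespace EJ

/-- Justification terms Tm(C): variables, constants, application and sum. -/
inductive Tm : Type
  | var : ℕ → Tm
  | const : ℕ → Tm
  | app : Tm → Tm → Tm
  | plus : Tm → Tm → Tm
  deriving DecidableEq

/-- Formulas Fm(C,D) of ∈_J-Logic. -/
inductive Fm : Type
  | pvar : ℕ → Fm
  | pconst : ℕ → Fm
  | imp : Fm → Fm → Fm
  | neg : Fm → Fm
  | ideq : Fm → Fm → Fm            -- φ ≡ ψ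
  | ref : Fm → Fm → Fm             -- φ < ψ
  | teq : Tm → Tm → Fm             -- s ≡ t
  | tle : Tm → Tm → Fm             -- s ≤ t
  | isTrue : Fm → Fm               -- φ : true
  | isFalse : Fm → Fm              -- φ : false
  | box : Fm → Fm                  -- □φ
  | just : Fm → Tm → Fm            -- φ : t
  | fAll : ℕ → Fm → Fm             -- ∀x.φ
  | jAll : ℕ → Fm → Fm             -- ⋀u.φ
  deriving DecidableEq

/-- variables of a term -/
def Tm.vars : Tm → Finset ℕ
  | .var u => {u}
  | .const _ => ∅
  | .app s t => s.vars ∪ t.vars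
  | .plus s t => s.vars ∪ t.vars

/-- constants of a term -/
def Tm.consts : Tm → Finset ℕ
  | .var _ => ∅
  | .const c => {c}
  | .app s t => s.consts ∪ t.consts
  | .plus s t => s.consts ∪ t.consts

/-- free propositional variables -/
def Fm.fvarP : Fm → Finset ℕ
  | .pvar x => {x}
  | .pconst _ => ∅
  | .imp φ ψ => φ.fvarP ∪ ψ.fvarP
  | .neg φ => φ.fvarP
  | .ideq φ ψ => φ.fvarP ∪ ψ.fvarP
  | .ref φ ψ => φ.fvarP ∪ ψ.fvarP
  | .teq _ _ => ∅
  | .tle _ _ => ∅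
  | .isTrue φ => φ.fvarP
  | .isFalse φ => φ.fvarP
  | .box φ => φ.fvarP
  | .just φ _ => φ.fvarP
  | .fAll x φ => φ.fvarP.erase x
  | .jAll _ φ => φ.fvarP

/-- free justification variables -/
def Fm.fvarJ : Fm → Finset ℕ
  | .pvar _ => ∅
  | .pconst _ => ∅
  | .imp φ ψ => φ.fvarJ ∪ ψ.fvarJ
  | .neg φ => φ.fvarJ
  | .ideq φ ψ => φ.fvarJ ∪ ψ.fvarJ
  | .ref φ ψ => φ.fvarJ ∪ ψ.fvarJ
  | .teq s t => s.vars ∪ t.vars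
  | .tle s t => s.vars ∪ t.vars
  | .isTrue φ => φ.fvarJ
  | .isFalse φ => φ.fvarJ
  | .box φ => φ.fvarJ
  | .just φ t => φ.fvarJ ∪ t.vars
  | .fAll _ φ => φ.fvarJ
  | .jAll u φ => φ.fvarJ.erase u

/-- propositional constants occurring in a formula -/
def Fm.pconsts : Fm → Finset ℕ
  | .pvar _ => ∅
  | .pconst d => {d}
  | .imp φ ψ => φ.pconsts ∪ ψ.pconsts
  | .neg φ => φ.pconsts
  | .ideq φ ψ => φ.pconsts ∪ ψ.pconsts
  | .ref φ ψ => φ.pconsts ∪ ψ.pconsts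
  | .teq _ _ => ∅
  | .tle _ _ => ∅
  | .isTrue φ => φ.pconsts
  | .isFalse φ => φ.pconsts
  | .box φ => φ.pconsts
  | .just φ _ => φ.pconsts
  | .fAll _ φ => φ.pconsts
  | .jAll _ φ => φ.pconsts

/-- justification constants occurring in a formula -/
def Fm.jconsts : Fm → Finset ℕ
  | .pvar _ => ∅
  | .pconst _ => ∅
  | .imp φ ψ => φ.jconsts ∪ ψ.jconsts
  | .neg φ => φ.jconsts
  | .ideq φ ψ => φ.jconsts ∪ ψ.jconsts
  | .ref φ ψ => φ.jconsts ∪ ψ.jconsts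
  | .teq s t => s.consts ∪ t.consts
  | .tle s t => s.consts ∪ t.consts
  | .isTrue φ => φ.jconsts
  | .isFalse φ => φ.jconsts
  | .box φ => φ.jconsts
  | .just φ t => φ.jconsts ∪ t.consts
  | .fAll _ φ => φ.jconsts
  | .jAll _ φ => φ.jconsts

/-- all propositional variables (free or bound) -/
def Fm.varP : Fm → Finset ℕ
  | .pvar x => {x}
  | .pconst _ => ∅
  | .imp φ ψ => φ.varP ∪ ψ.varP
  | .neg φ => φ.varP
  | .ideq φ ψ => φ.varP ∪ ψ.varP
  | .ref φ ψ => φ.varP ∪ ψ.varP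
  | .teq _ _ => ∅
  | .tle _ _ => ∅
  | .isTrue φ => φ.varP
  | .isFalse φ => φ.varP
  | .box φ => φ.varP
  | .just φ _ => φ.varP
  | .fAll x φ => insert x φ.varP
  | .jAll _ φ => φ.varP

/-- all justification variables (free or bound) -/
def Fm.varJ : Fm → Finset ℕ
  | .pvar _ => ∅
  | .pconst _ => ∅
  | .imp φ ψ => φ.varJ ∪ ψ.varJ
  | .neg φ => φ.varJ
  | .ideq φ ψ => φ.varJ ∪ ψ.varJ
  | .ref φ ψ => φ.varJ ∪ ψ.varJ
  | .teq s t => s.vars ∪ t.vars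
  | .tle s t => s.vars ∪ t.vars
  | .isTrue φ => φ.varJ
  | .isFalse φ => φ.varJ
  | .box φ => φ.varJ
  | .just φ t => φ.varJ ∪ t.vars
  | .fAll _ φ => φ.varJ
  | .jAll u φ => insert u φ.varJ

/-- A substitution: maps propositional variables/constants to formulas and
justification variables/constants to terms. -/
structure Subst where
  pv : ℕ → Fm
  jv : ℕ → Tm
  pc : ℕ → Fm
  jc : ℕ → Tm

/-- the identity substitution ε -/
def Subst.id : Subst := ⟨Fm.pvar, Tm.var, Fm.pconst, Tm.const⟩

def Subst.updP (σ : Subst) (x : ℕ) (e : Fm) : Subst :=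
  { σ with pv := Function.update σ.pv x e }

def Subst.updJ (σ : Subst) (u : ℕ) (t : Tm) : Subst :=
  { σ with jv := Function.update σ.jv u t }

def Subst.updPC (σ : Subst) (d : ℕ) (e : Fm) : Subst :=
  { σ with pc := Function.update σ.pc d e }

def Subst.updJC (σ : Subst) (c : ℕ) (t : Tm) : Subst :=
  { σ with jc := Function.update σ.jc c t }

/-- a substitution restricted to variables (identity on constants) -/
def Subst.IdOnConsts (σ : Subst) : Prop := σ.pc = Fm.pconst ∧ σ.jc = Tm.const

/-- substitution applied to a term -/
def Tm.subst : Tm → Subst → Tm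
  | .var u, σ => σ.jv u
  | .const c, σ => σ.jc c
  | .app s t, σ => .app (s.subst σ) (t.subst σ)
  | .plus s t, σ => .plus (s.subst σ) (t.subst σ)

/-- the propositional variable forced by σ w.r.t. a quantified formula:
the least variable greater than all free propositional variables of the images
under σ of the free symbols of the formula -/
def pForced (σ : Subst) (φ : Fm) : ℕ :=
  ((φ.fvarP.biUnion fun w => (σ.pv w).fvarP) ∪
   (φ.pconsts.biUnion fun w => (σ.pc w).fvarP)).sup Nat.succ

/-- the justification variable forced by σ w.r.t. a quantified formula -/
def jForced (σ : Subst) (φ : Fm) : ℕ :=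
  ((φ.fvarP.biUnion fun w => (σ.pv w).fvarJ) ∪
   (φ.pconsts.biUnion fun w => (σ.pc w).fvarJ) ∪
   (φ.fvarJ.biUnion fun w => (σ.jv w).vars) ∪
   (φ.jconsts.biUnion fun w => (σ.jc w).vars)).sup Nat.succ

/-- capture-avoiding substitution on formulas, renaming bound variables
canonically to the forced fresh variable -/
def Fm.subst : Fm → Subst → Fm
  | .pvar x, σ => σ.pv x
  | .pconst d, σ => σ.pc d
  | .imp φ ψ, σ => .imp (φ.subst σ) (ψ.subst σ)
  | .neg φ, σ => .neg (φ.subst σ)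
  | .ideq φ ψ, σ => .ideq (φ.subst σ) (ψ.subst σ)
  | .ref φ ψ, σ => .ref (φ.subst σ) (ψ.subst σ)
  | .teq s t, σ => .teq (s.subst σ) (t.subst σ)
  | .tle s t, σ => .tle (s.subst σ) (t.subst σ)
  | .isTrue φ, σ => .isTrue (φ.subst σ)
  | .isFalse φ, σ => .isFalse (φ.subst σ)
  | .box φ, σ => .box (φ.subst σ)
  | .just φ t, σ => .just (φ.subst σ) (t.subst σ)
  | .fAll x φ, σ =>
      let y := pForced σ (.fAll x φ)
      .fAll y (φ.subst (σ.updP x (.pvar y)))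
  | .jAll u φ, σ =>
      let v := jForced σ (.jAll u φ)
      .jAll v (φ.subst (σ.updJ u (.var v)))

/-- single-point substitution [x := ψ] for a propositional variable -/
def Fm.subst1P (φ : Fm) (x : ℕ) (ψ : Fm) : Fm := φ.subst (Subst.id.updP x ψ)

/-- single-point substitution [u := t] for a justification variable -/
def Fm.subst1J (φ : Fm) (u : ℕ) (t : Tm) : Fm := φ.subst (Subst.id.updJ u t)

/-- composition of substitutions: (σ ∘ τ)(x) = σ(x)[τ] -/
def Subst.comp (σ τ : Subst) : Subst :=
  ⟨fun x => (σ.pv x).subst τ, fun u => (σ.jv u).subst τ,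
   fun d => (σ.pc d).subst τ, fun c => (σ.jc c).subst τ⟩

/-- alpha-congruence: the smallest equivalence relation compatible with all
connectives and identifying formulas differing only in bound variables -/
inductive Alpha : Fm → Fm → Prop
  | refl (φ) : Alpha φ φ
  | symm : Alpha φ ψ → Alpha ψ φ
  | trans : Alpha φ ψ → Alpha ψ χ → Alpha φ χ
  | imp : Alpha φ₁ ψ₁ → Alpha φ₂ ψ₂ → Alpha (.imp φ₁ φ₂) (.imp ψ₁ ψ₂)
  | ideq : Alpha φ₁ ψ₁ → Alpha φ₂ ψ₂ → Alpha (.ideq φ₁ φ₂) (.ideq ψ₁ ψ₂)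
  | ref : Alpha φ₁ ψ₁ → Alpha φ₂ ψ₂ → Alpha (.ref φ₁ φ₂) (.ref ψ₁ ψ₂)
  | neg : Alpha φ ψ → Alpha (.neg φ) (.neg ψ)
  | isTrue : Alpha φ ψ → Alpha (.isTrue φ) (.isTrue ψ)
  | isFalse : Alpha φ ψ → Alpha (.isFalse φ) (.isFalse ψ)
  | box : Alpha φ ψ → Alpha (.box φ) (.box ψ)
  | just (t) : Alpha φ ψ → Alpha (.just φ t) (.just ψ t)
  | jAll : Alpha φ (ψ.subst1J v (.var u)) → (u ≠ v → u ∉ ψ.fvarJ) →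
      Alpha (.jAll u φ) (.jAll v ψ)
  | fAll : Alpha φ (ψ.subst1P y (.pvar x)) → (x ≠ y → x ∉ ψ.fvarP) →
      Alpha (.fAll x φ) (.fAll y ψ)

/-- syntactical reference φ ≺ ψ -/
def Sref (φ ψ : Fm) : Prop :=
  ∃ (x : ℕ) (ψ' : Fm), ψ' ≠ .pvar x ∧ x ∈ ψ'.fvarP ∧ Alpha (ψ'.subst1P x φ) ψ

/-! ## derived connectives -/

def Fm.and (φ ψ : Fm) : Fm := .neg (.imp φ (.neg ψ))
def Fm.iff (φ ψ : Fm) : Fm := (Fm.imp φ ψ).and (Fm.imp ψ φ)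
def Fm.jEx (u : ℕ) (φ : Fm) : Fm := .neg (.jAll u (.neg φ))
def Fm.fEx (x : ℕ) (φ : Fm) : Fm := .neg (.fAll x (.neg φ))

/-- conjunction of a list of formulas -/
def bigAnd : List Fm → Fm
  | [] => .imp (.pvar 0) (.pvar 0)
  | [φ] => φ
  | φ :: ψ :: rest => Fm.and φ (bigAnd (ψ :: rest))

/-- the formula σ ≡_φ σ' : conjunction of σ(x) ≡ σ'(x) over the free variables
of φ (in the order of the underlying well-orderings) -/
def eqOnF (σ σ' : Subst) (φ : Fm) : Fm :=
  bigAnd (((φ.fvarP.sort (· ≤ ·)).map fun x => Fm.ideq (σ.pv x) (σ'.pv x)) ++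
          ((φ.fvarJ.sort (· ≤ ·)).map fun u => Fm.teq (σ.jv u) (σ'.jv u)))

/-- the formula σ ≡_t σ' for a term t -/
def eqOnT (σ σ' : Subst) (t : Tm) : Fm :=
  bigAnd ((t.vars.sort (· ≤ ·)).map fun u => Fm.teq (σ.jv u) (σ'.jv u))

/-! ## the Hilbert system Ax -/

/-- boolean evaluation treating formulas other than →, ¬ as atoms -/
def Fm.evalB (v : Fm → Bool) : Fm → Bool
  | .imp φ ψ => !(φ.evalB v) || ψ.evalB v
  | .neg φ => !(φ.evalB v)
  | φ => v φ

/-- propositional tautology (a sufficient set of tautologies) -/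
def Taut (φ : Fm) : Prop := ∀ v : Fm → Bool, φ.evalB v = true

/-- the axiom system Ax of ∈_J-Logic (Definition 3.1) -/
inductive Ax : Fm → Prop
  | taut : Taut φ → Ax φ
  | tarski (φ) : Ax ((Fm.isTrue φ).iff φ)
  | falsity (φ) : Ax ((Fm.isFalse φ).iff (.neg φ))
  | appl (φ ψ s t) :
      Ax (.imp (.just (.imp φ ψ) s) (.imp (.just φ t) (.just ψ (.app s t))))
  | weak1 (φ s t) : Ax (.imp (.just φ s) (.just φ (.plus s t)))
  | weak2 (φ s t) : Ax (.imp (.just φ t) (.just φ (.plus s t)))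
  | necJust (φ u) : u ∉ φ.fvarJ →
      Ax ((Fm.box φ).iff (Fm.jEx u (.just φ (.var u))))
  | boxT (φ) : Ax (.imp (.box φ) φ)
  | refAx : Sref φ ψ → Ax (.ref φ ψ)
  | refTrans (φ ψ χ) : Ax (.imp (.ref φ ψ) (.imp (.ref ψ χ) (.ref φ χ)))
  | alphaAx : Alpha φ ψ → Ax (.ideq φ ψ)
  | eqImp (φ ψ) : Ax (.imp (.ideq φ ψ) (.imp φ ψ))
  | substP (σ σ' φ) : Ax (.imp (eqOnF σ σ' φ) (.ideq (φ.subst σ) (φ.subst σ')))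
  | jExInst (φ u t) : Ax (.imp (φ.subst1J u t) (Fm.jEx u φ))
  | jAllInst (φ u t) : Ax (.imp (.jAll u φ) (φ.subst1J u t))
  | jDistrib (φ ψ u) :
      Ax (.imp (.jAll u (.imp ψ φ)) (.imp (.jAll u ψ) (.jAll u φ)))
  | jVac (φ ψ u) : u ∉ ψ.fvarJ →
      Ax (.imp (.jAll u (.imp ψ φ)) (.imp ψ (.jAll u φ)))
  | pExInst (φ x ψ) : Ax (.imp (φ.subst1P x ψ) (Fm.fEx x φ))
  | pAllInst (φ x ψ) : Ax (.imp (.fAll x φ) (φ.subst1P x ψ))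
  | pDistrib (φ ψ x) :
      Ax (.imp (.fAll x (.imp ψ φ)) (.imp (.fAll x ψ) (.fAll x φ)))
  | pVac (φ ψ x) : x ∉ ψ.fvarP →
      Ax (.imp (.fAll x (.imp ψ φ)) (.imp ψ (.fAll x φ)))
  | leDef (s t x) :
      Ax ((Fm.tle s t).iff
        (.fAll x (.imp (.just (.pvar x) s) (.just (.pvar x) t))))
  | ext (s t) : Ax ((Fm.teq s t).iff ((Fm.tle s t).and (Fm.tle t s)))
  | substT (σ σ' t) : Ax (.imp (eqOnT σ σ' t) (.teq (t.subst σ) (t.subst σ')))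
  | genJ : Ax φ → u ∈ φ.fvarJ → Ax (.jAll u φ)
  | genP : Ax φ → x ∈ φ.fvarP → Ax (.fAll x φ)

/-- derivability from Φ in the Hilbert system Ax with Modus Ponens -/
inductive Deriv (Φ : Set Fm) : Fm → Prop
  | hyp : φ ∈ Φ → Deriv Φ φ
  | ax : Ax φ → Deriv Φ φ
  | mp : Deriv Φ (.imp φ ψ) → Deriv Φ φ → Deriv Φ ψ

def Consistent (Φ : Set Fm) : Prop := ¬ ∃ φ, Deriv Φ φ ∧ Deriv Φ (.neg φ)

def MaxConsistent (Φ : Set Fm) : Prop :=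
  Consistent Φ ∧ ∀ ψ, ψ ∉ Φ → ¬ Consistent (insert ψ Φ)

/-- Henkin set (Definition 4.4) -/
def Henkin (Φ : Set Fm) : Prop :=
  MaxConsistent Φ ∧
  (∀ u φ, Deriv Φ (.jAll u φ) ↔ ∀ c : ℕ, Deriv Φ (φ.subst1J u (.const c))) ∧
  (∀ x φ, Deriv Φ (.fAll x φ) ↔ ∀ d : ℕ, Deriv Φ (φ.subst1P x (.pconst d)))

/-! ## semantics -/

/-- an assignment of propositions to propositional variables and indexes to
justification variables -/
structure Assign (P I : Type) where
  gp : ℕ → P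
  gj : ℕ → I

def Assign.updP {P I : Type} (γ : Assign P I) (x : ℕ) (m : P) : Assign P I :=
  ⟨Function.update γ.gp x m, γ.gj⟩

def Assign.updJ {P I : Type} (γ : Assign P I) (u : ℕ) (l : I) : Assign P I :=
  ⟨γ.gp, Function.update γ.gj u l⟩

/-- a model of ∈_J-Logic (Definition 4.1) -/
structure JModel where
  P : Type                                  -- the propositional universe M
  I : Type                                  -- the set L of indexes
  TRUE : Set P
  FALSE : Set P
  NEC : Set P
  REASON : I → Set P
  ref : P → P → Prop                        -- the reference relation <^M
  plusI : I → I → I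
  dotI : I → I → I
  leI : I → I → Prop
  G : Fm → Assign P I → P                   -- Gamma-function on formulas
  GT : Tm → Assign P I → I                  -- Gamma-function on terms
  cover : TRUE ∪ FALSE = Set.univ
  disj : TRUE ∩ FALSE = ∅
  nec_sub : NEC ⊆ TRUE
  nec_union : NEC = ⋃ l, REASON l
  le_iso : ∀ l k, leI l k ↔ REASON l ⊆ REASON k
  reason_inj : Function.Injective REASON
  ref_trans : Transitive ref
  -- structure conditions
  ep : ∀ x γ, G (.pvar x) γ = γ.gp x
  epT : ∀ u γ, GT (.var u) γ = γ.gj u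
  cp : ∀ φ γ γ', (∀ x ∈ Fm.fvarP φ, γ.gp x = Assign.gp γ' x) →
      (∀ u ∈ Fm.fvarJ φ, γ.gj u = Assign.gj γ' u) → G φ γ = G φ γ'
  cpT : ∀ t γ γ', (∀ u ∈ Tm.vars t, γ.gj u = Assign.gj γ' u) → GT t γ = GT t γ'
  sp : ∀ φ (σ : Subst) γ, σ.IdOnConsts →
      G (φ.subst σ) γ = G φ ⟨fun x => G (σ.pv x) γ, fun u => GT (σ.jv u) γ⟩
  spT : ∀ t (σ : Subst) γ, σ.IdOnConsts →
      GT (t.subst σ) γ = GT t ⟨fun x => G (σ.pv x) γ, fun u => GT (σ.jv u) γ⟩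
  rp : ∀ φ ψ γ, Sref φ ψ → ref (G φ γ) (G ψ γ)
  hp_plus : ∀ s t γ, GT (.plus s t) γ = plusI (GT s γ) (GT t γ)
  hp_dot : ∀ s t γ, GT (.app s t) γ = dotI (GT s γ) (GT t γ)
  -- truth conditions
  t_imp : ∀ φ ψ γ, (G (.imp φ ψ) γ ∈ TRUE ↔ (G φ γ ∈ FALSE ∨ G ψ γ ∈ TRUE))
  t_neg : ∀ φ γ, (G (.neg φ) γ ∈ TRUE ↔ G φ γ ∉ TRUE)
  t_true : ∀ φ γ, (G (.isTrue φ) γ ∈ TRUE ↔ G φ γ ∈ TRUE)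
  t_false : ∀ φ γ, (G (.isFalse φ) γ ∈ TRUE ↔ G φ γ ∈ FALSE)
  t_ideq : ∀ φ ψ γ, (G (.ideq φ ψ) γ ∈ TRUE ↔ G φ γ = G ψ γ)
  t_ref : ∀ φ ψ γ, (G (.ref φ ψ) γ ∈ TRUE ↔ ref (G φ γ) (G ψ γ))
  t_teq : ∀ s t γ, (G (.teq s t) γ ∈ TRUE ↔ GT s γ = GT t γ)
  t_tle : ∀ s t γ, (G (.tle s t) γ ∈ TRUE ↔ leI (GT s γ) (GT t γ))
  t_box : ∀ φ γ, (G (.box φ) γ ∈ TRUE ↔ G φ γ ∈ NEC)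
  t_just : ∀ φ t γ, (G (.just φ t) γ ∈ TRUE ↔ G φ γ ∈ REASON (GT t γ))
  t_app : ∀ φ ψ s t γ, G (.imp φ ψ) γ ∈ REASON (GT s γ) →
      G φ γ ∈ REASON (GT t γ) → G ψ γ ∈ REASON (GT (.app s t) γ)
  t_plusJ : ∀ φ s t γ, G φ γ ∈ REASON (GT s γ) ∪ REASON (GT t γ) →
      G φ γ ∈ REASON (GT (.plus s t) γ)
  t_jAll : ∀ u φ γ, (G (.jAll u φ) γ ∈ TRUE ↔ ∀ l, G φ (γ.updJ u l) ∈ TRUE)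
  t_fAll : ∀ x φ γ, (G (.fAll x φ) γ ∈ TRUE ↔ ∀ m, G φ (γ.updP x m) ∈ TRUE)

/-- satisfaction -/
def JModel.Sat (M : JModel) (γ : Assign M.P M.I) (φ : Fm) : Prop :=
  M.G φ γ ∈ M.TRUE

/-- logical consequence over all models -/
def Conseq (Φ : Set Fm) (φ : Fm) : Prop :=
  ∀ (M : JModel) (γ : Assign M.P M.I), (∀ ψ ∈ Φ, M.Sat γ ψ) → M.Sat γ φ

/-! ## S4 extensions -/

/-- the axioms of Ax + (4) -/
inductive Ax4 : Fm → Prop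
  | base : Ax φ → Ax4 φ
  | four (φ) : Ax4 (.imp (.box φ) (.box (.box φ)))

/-- derivability in Ax + (4) + (AxNec): MP plus Axiom Necessitation -/
inductive Deriv4 (Φ : Set Fm) : Fm → Prop
  | hyp : φ ∈ Φ → Deriv4 Φ φ
  | ax : Ax4 φ → Deriv4 Φ φ
  | axnec : Ax4 φ → Deriv4 Φ (.box φ)
  | mp : Deriv4 Φ (.imp φ ψ) → Deriv4 Φ φ → Deriv4 Φ ψ

/-- truth condition (4) -/
def Cond4 (M : JModel) : Prop :=
  ∀ φ γ, M.Sat γ (.box φ) → M.Sat γ (.box (.box φ))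

/-- truth condition (AxNec) -/
def CondAxNec (M : JModel) : Prop :=
  ∀ φ γ, Ax4 φ → M.Sat γ (.box φ)

/-! ## basic modal language and S4 -/

inductive MFm : Type
  | var : ℕ → MFm
  | imp : MFm → MFm → MFm
  | neg : MFm → MFm
  | box : MFm → MFm
  deriving DecidableEq

def MFm.toFm : MFm → Fm
  | .var x => .pvar x
  | .imp a b => .imp a.toFm b.toFm
  | .neg a => .neg a.toFm
  | .box a => .box a.toFm

def MFm.evalB (v : MFm → Bool) : MFm → Bool
  | .imp a b => !(a.evalB v) || b.evalB v
  | .neg a => !(a.evalB v)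
  | a => v a

def MTaut (a : MFm) : Prop := ∀ v, a.evalB v = true

/-- the modal logic S4 -/
inductive S4 : MFm → Prop
  | taut : MTaut a → S4 a
  | axK (a b) : S4 (.imp (.box (.imp a b)) (.imp (.box a) (.box b)))
  | axT (a) : S4 (.imp (.box a) a)
  | ax4 (a) : S4 (.imp (.box a) (.box (.box a)))
  | mp : S4 (.imp a b) → S4 a → S4 b
  | nec : S4 a → S4 (.box a)

/-- an S4 frame: reflexive and transitive accessibility -/
structure S4Frame where
  W : Type
  R : W → W → Prop
  refl : Reflexive R
  trans : Transitive R

/-- Kripke satisfaction -/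
def KSat (F : S4Frame) (g : F.W → ℕ → Prop) : F.W → MFm → Prop
  | w, .var x => g w x
  | w, .imp a b => KSat F g w a → KSat F g w b
  | w, .neg a => ¬ KSat F g w a
  | w, .box a => ∀ w', F.R w w' → KSat F g w' a


/-!
Alpha-congruent formulas have equal instances under every substitution, by induction on `=_α`.
In the binder case the point is that the fresh variable `Fm.subst σ` picks for `∀x.φ` is the
least variable above the free variables of the single instance `φ[σ, x ↦ d]` of the body, `d` a
constant (`pForced_fAll`). So the fresh variable is determined by instances of the body just as
the renamed body is, and the induction hypothesis covers both; the renaming `ψ[y := x]` in the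
premise is absorbed by the composition law `φ[σ][τ] = φ[σ ∘ τ]`. Conversely `φ[ε] =_α φ`, since
`ε` merely renames each bound variable to a fresh one.
-/

namespace Tm

theorem mem_vars_subst {a : ℕ} {t : Tm} {σ : Subst} :
    a ∈ (t.subst σ).vars ↔
      (∃ u ∈ t.vars, a ∈ (σ.jv u).vars) ∨ ∃ c ∈ t.consts, a ∈ (σ.jc c).vars := by
  induction t with
  | var u => simp [Tm.subst, Tm.vars, Tm.consts]
  | const c => simp [Tm.subst, Tm.vars, Tm.consts]
  | app s t ihs iht | plus s t ihs iht =>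
    simp only [Tm.subst, Tm.vars, Tm.consts, Finset.mem_union, ihs, iht]
    grind

theorem subst_congr {t : Tm} {σ σ' : Subst} (hv : ∀ u ∈ t.vars, σ.jv u = σ'.jv u)
    (hc : ∀ c ∈ t.consts, σ.jc c = σ'.jc c) : t.subst σ = t.subst σ' := by
  induction t with
  | var u => simpa [Tm.subst, Tm.vars] using hv
  | const c => simpa [Tm.subst, Tm.consts] using hc
  | app s t ihs iht | plus s t ihs iht => simp_all [Tm.subst, Tm.vars, Tm.consts]

theorem subst_updP (t : Tm) (σ : Subst) (x : ℕ) (e : Fm) : t.subst (σ.updP x e) = t.subst σ :=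
  subst_congr (fun _ _ => rfl) fun _ _ => rfl

theorem subst_updJ_of_notMem {t : Tm} {u : ℕ} (h : u ∉ t.vars) (σ : Subst) (s : Tm) :
    t.subst (σ.updJ u s) = t.subst σ :=
  subst_congr (fun _ hw => Function.update_of_ne (ne_of_mem_of_not_mem hw h) _ _) fun _ _ => rfl

theorem subst_subst (t : Tm) (σ τ : Subst) : (t.subst σ).subst τ = t.subst (σ.comp τ) := by
  induction t <;> simp_all [Tm.subst, Subst.comp]

theorem subst_id (t : Tm) : t.subst Subst.id = t := by
  induction t <;> simp_all [Tm.subst, Subst.id]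

end Tm

section Forced

variable (σ : Subst) (χ : Fm) {w : ℕ}

theorem pForced_notMem_fvarP_pv (hw : w ∈ χ.fvarP) : pForced σ χ ∉ (σ.pv w).fvarP := fun h =>
  Nat.lt_irrefl (pForced σ χ) (Finset.le_sup (f := Nat.succ)
    (by simp only [Finset.mem_union, Finset.mem_biUnion]; grind))

theorem pForced_notMem_fvarP_pc (hw : w ∈ χ.pconsts) : pForced σ χ ∉ (σ.pc w).fvarP := fun h =>
  Nat.lt_irrefl (pForced σ χ) (Finset.le_sup (f := Nat.succ)
    (by simp only [Finset.mem_union, Finset.mem_biUnion]; grind))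

theorem jForced_notMem_fvarJ_pv (hw : w ∈ χ.fvarP) : jForced σ χ ∉ (σ.pv w).fvarJ := fun h =>
  Nat.lt_irrefl (jForced σ χ) (Finset.le_sup (f := Nat.succ)
    (by simp only [Finset.mem_union, Finset.mem_biUnion]; grind))

theorem jForced_notMem_fvarJ_pc (hw : w ∈ χ.pconsts) : jForced σ χ ∉ (σ.pc w).fvarJ := fun h =>
  Nat.lt_irrefl (jForced σ χ) (Finset.le_sup (f := Nat.succ)
    (by simp only [Finset.mem_union, Finset.mem_biUnion]; grind))

theorem jForced_notMem_vars_jv (hw : w ∈ χ.fvarJ) : jForced σ χ ∉ (σ.jv w).vars := fun h =>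
  Nat.lt_irrefl (jForced σ χ) (Finset.le_sup (f := Nat.succ)
    (by simp only [Finset.mem_union, Finset.mem_biUnion]; grind))

theorem jForced_notMem_vars_jc (hw : w ∈ χ.jconsts) : jForced σ χ ∉ (σ.jc w).vars := fun h =>
  Nat.lt_irrefl (jForced σ χ) (Finset.le_sup (f := Nat.succ)
    (by simp only [Finset.mem_union, Finset.mem_biUnion]; grind))

end Forced

namespace Fm

theorem mem_fvarP_subst {a : ℕ} {φ : Fm} {σ : Subst} :
    a ∈ (φ.subst σ).fvarP ↔
      (∃ x ∈ φ.fvarP, a ∈ (σ.pv x).fvarP) ∨ ∃ d ∈ φ.pconsts, a ∈ (σ.pc d).fvarP := by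
  induction φ generalizing σ with
  | fAll x φ ih =>
    have fresh_pv := @pForced_notMem_fvarP_pv σ (.fAll x φ)
    have fresh_pc := @pForced_notMem_fvarP_pc σ (.fAll x φ)
    simp only [Fm.fvarP, Fm.pconsts] at fresh_pv fresh_pc
    simp only [Fm.subst, Subst.updP, Fm.fvarP, Fm.pconsts, Finset.mem_erase, ne_eq, ih,
      Function.update_apply, apply_ite Fm.fvarP]
    grind
  | jAll u φ ih => simp only [Fm.subst, Fm.fvarP, Fm.pconsts, ih]; rfl
  | _ => grind [Fm.subst, Fm.fvarP, Fm.pconsts]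

theorem mem_fvarJ_subst {a : ℕ} {φ : Fm} {σ : Subst} :
    a ∈ (φ.subst σ).fvarJ ↔
      (∃ x ∈ φ.fvarP, a ∈ (σ.pv x).fvarJ) ∨ (∃ d ∈ φ.pconsts, a ∈ (σ.pc d).fvarJ) ∨
        (∃ u ∈ φ.fvarJ, a ∈ (σ.jv u).vars) ∨ ∃ c ∈ φ.jconsts, a ∈ (σ.jc c).vars := by
  induction φ generalizing σ with
  | fAll x φ ih =>
    simp only [Fm.subst, Subst.updP, Fm.fvarP, Fm.fvarJ, Fm.pconsts, Fm.jconsts, Finset.mem_erase,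
      ne_eq, ih, Function.update_apply, apply_ite Fm.fvarJ]
    grind
  | jAll u φ ih =>
    have fresh_pv := @jForced_notMem_fvarJ_pv σ (.jAll u φ)
    have fresh_pc := @jForced_notMem_fvarJ_pc σ (.jAll u φ)
    have fresh_jv := @jForced_notMem_vars_jv σ (.jAll u φ)
    have fresh_jc := @jForced_notMem_vars_jc σ (.jAll u φ)
    simp only [Fm.fvarP, Fm.fvarJ, Fm.pconsts, Fm.jconsts] at fresh_pv fresh_pc fresh_jv fresh_jc
    simp only [Fm.subst, Subst.updJ, Fm.fvarP, Fm.fvarJ, Fm.pconsts, Fm.jconsts, Finset.mem_erase,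
      ne_eq, ih, Function.update_apply, apply_ite Tm.vars, Tm.vars]
    grind
  | _ => grind [Fm.subst, Fm.fvarP, Fm.fvarJ, Fm.pconsts, Fm.jconsts, Tm.mem_vars_subst]

end Fm

theorem pForced_fAll (σ : Subst) (x : ℕ) (φ : Fm) :
    pForced σ (.fAll x φ) = (φ.subst (σ.updP x (.pconst 0))).fvarP.sup Nat.succ := by
  unfold pForced
  congr 1
  ext a
  rw [Fm.mem_fvarP_subst]
  simp only [Fm.fvarP, Fm.pconsts, Finset.mem_union, Finset.mem_biUnion, Finset.mem_erase, ne_eq,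
    Subst.updP, Function.update_apply, apply_ite Fm.fvarP]
  grind

theorem jForced_jAll (σ : Subst) (u : ℕ) (φ : Fm) :
    jForced σ (.jAll u φ) = (φ.subst (σ.updJ u (.const 0))).fvarJ.sup Nat.succ := by
  unfold jForced
  congr 1
  ext a
  rw [Fm.mem_fvarJ_subst]
  simp only [Fm.fvarP, Fm.fvarJ, Fm.pconsts, Fm.jconsts, Finset.union_assoc, Finset.mem_union,
    Finset.mem_biUnion, Finset.mem_erase, ne_eq, Subst.updJ, Function.update_apply,
    apply_ite Tm.vars, Tm.vars]
  grind

namespace Fm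

theorem subst_congr {φ : Fm} {σ σ' : Subst} (hp : ∀ x ∈ φ.fvarP, σ.pv x = σ'.pv x)
    (hj : ∀ u ∈ φ.fvarJ, σ.jv u = σ'.jv u) (hpc : ∀ d ∈ φ.pconsts, σ.pc d = σ'.pc d)
    (hjc : ∀ c ∈ φ.jconsts, σ.jc c = σ'.jc c) : φ.subst σ = φ.subst σ' := by
  induction φ generalizing σ σ' with
  | pvar x => exact hp x (Finset.mem_singleton_self x)
  | pconst d => exact hpc d (Finset.mem_singleton_self d)
  | fAll x φ ih =>
    have body : ∀ e, φ.subst (σ.updP x e) = φ.subst (σ'.updP x e) := by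
      refine fun e => ih (fun w hw => ?_) hj hpc hjc
      by_cases hwx : w = x
      · simp [Subst.updP, hwx]
      · simpa [Subst.updP, hwx] using hp w (Finset.mem_erase.2 ⟨hwx, hw⟩)
    simp only [Fm.subst, pForced_fAll, body]
  | jAll u φ ih =>
    have body : ∀ t, φ.subst (σ.updJ u t) = φ.subst (σ'.updJ u t) := by
      refine fun t => ih hp (fun w hw => ?_) hpc hjc
      by_cases hwu : w = u
      · simp [Subst.updJ, hwu]
      · simpa [Subst.updJ, hwu] using hj w (Finset.mem_erase.2 ⟨hwu, hw⟩)
    simp only [Fm.subst, jForced_jAll, body]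
  | _ =>
    simp only [Fm.subst]
    congr 1 <;> (first | apply Tm.subst_congr | apply_assumption) <;> intro _ _ <;>
      simp_all [Fm.fvarP, Fm.fvarJ, Fm.pconsts, Fm.jconsts]

theorem subst_updP_of_notMem {φ : Fm} {x : ℕ} (h : x ∉ φ.fvarP) (σ : Subst) (e : Fm) :
    φ.subst (σ.updP x e) = φ.subst σ :=
  subst_congr (fun _ hw => Function.update_of_ne (ne_of_mem_of_not_mem hw h) _ _)
    (fun _ _ => rfl) (fun _ _ => rfl) fun _ _ => rfl

theorem subst_updJ_of_notMem {φ : Fm} {u : ℕ} (h : u ∉ φ.fvarJ) (σ : Subst) (t : Tm) :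
    φ.subst (σ.updJ u t) = φ.subst σ :=
  subst_congr (fun _ _ => rfl) (fun _ hw => Function.update_of_ne (ne_of_mem_of_not_mem hw h) _ _)
    (fun _ _ => rfl) fun _ _ => rfl

theorem subst_subst (φ : Fm) (σ τ : Subst) : (φ.subst σ).subst τ = φ.subst (σ.comp τ) := by
  induction φ generalizing σ τ with
  | fAll x φ ih =>
    set y := pForced σ (.fAll x φ)
    have body : ∀ e, φ.subst ((σ.updP x (.pvar y)).comp (τ.updP y e)) =
        φ.subst ((σ.comp τ).updP x e) := by
      refine fun e => subst_congr (fun w hw => ?_) (fun _ _ => Tm.subst_updP _ _ _ _)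
        (fun d hd => subst_updP_of_notMem (pForced_notMem_fvarP_pc σ (.fAll x φ) hd) _ _)
        (fun _ _ => Tm.subst_updP _ _ _ _)
      by_cases hwx : w = x
      · simp [hwx, Subst.comp, Subst.updP, Fm.subst]
      · simp only [Subst.comp, Subst.updP, Function.update_of_ne hwx]
        exact subst_updP_of_notMem
          (pForced_notMem_fvarP_pv σ (.fAll x φ) (Finset.mem_erase.2 ⟨hwx, hw⟩)) _ _
    show (Fm.fAll y (φ.subst (σ.updP x (.pvar y)))).subst τ = _
    simp only [Fm.subst, pForced_fAll, ih, body]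
  | jAll u φ ih =>
    set v := jForced σ (.jAll u φ)
    have body : ∀ t, φ.subst ((σ.updJ u (.var v)).comp (τ.updJ v t)) =
        φ.subst ((σ.comp τ).updJ u t) := by
      refine fun t => subst_congr
        (fun w hw => subst_updJ_of_notMem (jForced_notMem_fvarJ_pv σ (.jAll u φ) hw) _ _)
        (fun w hw => ?_)
        (fun d hd => subst_updJ_of_notMem (jForced_notMem_fvarJ_pc σ (.jAll u φ) hd) _ _)
        (fun c hc => Tm.subst_updJ_of_notMem (jForced_notMem_vars_jc σ (.jAll u φ) hc) _ _)
      by_cases hwu : w = u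
      · simp [hwu, Subst.comp, Subst.updJ, Tm.subst]
      · simp only [Subst.comp, Subst.updJ, Function.update_of_ne hwu]
        exact Tm.subst_updJ_of_notMem
          (jForced_notMem_vars_jv σ (.jAll u φ) (Finset.mem_erase.2 ⟨hwu, hw⟩)) _ _
    show (Fm.jAll v (φ.subst (σ.updJ u (.var v)))).subst τ = _
    simp only [Fm.subst, jForced_jAll, ih, body]
  | _ => simp_all [Fm.subst, Subst.comp, Tm.subst_subst]

theorem subst1P_pvar_subst_updP {ψ : Fm} {x y : ℕ} (h : x ≠ y → x ∉ ψ.fvarP) (σ : Subst)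
    (e : Fm) : (ψ.subst1P y (.pvar x)).subst (σ.updP x e) = ψ.subst (σ.updP y e) := by
  rw [Fm.subst1P, subst_subst]
  refine subst_congr (fun w hw => ?_) (fun _ _ => rfl) (fun _ _ => rfl) fun _ _ => rfl
  by_cases hwy : w = y
  · simp [hwy, Subst.comp, Subst.updP, Fm.subst]
  · have hwx : w ≠ x := fun hwx => h (hwx ▸ hwy) (hwx ▸ hw)
    simp [hwy, hwx, Subst.comp, Subst.updP, Subst.id, Fm.subst]

theorem subst1J_var_subst_updJ {ψ : Fm} {u v : ℕ} (h : u ≠ v → u ∉ ψ.fvarJ) (σ : Subst)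
    (t : Tm) : (ψ.subst1J v (.var u)).subst (σ.updJ u t) = ψ.subst (σ.updJ v t) := by
  rw [Fm.subst1J, subst_subst]
  refine subst_congr (fun _ _ => rfl) (fun w hw => ?_) (fun _ _ => rfl) fun _ _ => rfl
  by_cases hwv : w = v
  · simp [hwv, Subst.comp, Subst.updJ, Tm.subst]
  · have hwu : w ≠ u := fun hwu => h (hwu ▸ hwv) (hwu ▸ hw)
    simp [hwv, hwu, Subst.comp, Subst.updJ, Subst.id, Tm.subst]

end Fm

theorem Alpha.subst_eq {φ ψ : Fm} (h : Alpha φ ψ) (σ : Subst) : φ.subst σ = ψ.subst σ := by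
  induction h generalizing σ with
  | trans _ _ ih₁ ih₂ => exact (ih₁ σ).trans (ih₂ σ)
  | jAll _ hfresh ih => simp only [Fm.subst, jForced_jAll, ih, Fm.subst1J_var_subst_updJ hfresh]
  | fAll _ hfresh ih => simp only [Fm.subst, pForced_fAll, ih, Fm.subst1P_pvar_subst_updP hfresh]
  | _ => simp_all [Fm.subst]

theorem alpha_subst_id (φ : Fm) : Alpha (φ.subst Subst.id) φ := by
  induction φ with
  | pvar | pconst => exact Alpha.refl _
  | imp _ _ ih₁ ih₂ => exact ih₁.imp ih₂
  | ideq _ _ ih₁ ih₂ => exact ih₁.ideq ih₂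
  | ref _ _ ih₁ ih₂ => exact ih₁.ref ih₂
  | neg _ ih => exact ih.neg
  | isTrue _ ih => exact ih.isTrue
  | isFalse _ ih => exact ih.isFalse
  | box _ ih => exact ih.box
  | teq s t | tle s t => simpa [Fm.subst, Tm.subst_id] using Alpha.refl _
  | just φ t ih => simpa [Fm.subst, Tm.subst_id] using ih.just t
  | fAll x φ =>
    refine Alpha.fAll (Alpha.refl _) fun hne hmem => ?_
    exact pForced_notMem_fvarP_pv Subst.id (.fAll x φ) (Finset.mem_erase.2 ⟨hne, hmem⟩)
      (Finset.mem_singleton_self _)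
  | jAll u φ =>
    refine Alpha.jAll (Alpha.refl _) fun hne hmem => ?_
    exact jForced_notMem_vars_jv Subst.id (.jAll u φ) (Finset.mem_erase.2 ⟨hne, hmem⟩)
      (Finset.mem_singleton_self _)

end EJ

/-- φ =_α ψ iff φ[ε] = ψ[ε]; moreover φ[ε] =_α φ. -/
theorem alpha_normal_form (φ ψ : EJ.Fm) :
    (EJ.Alpha φ ψ ↔ φ.subst EJ.Subst.id = ψ.subst EJ.Subst.id) ∧
    EJ.Alpha (φ.subst EJ.Subst.id) φ := by
  refine ⟨⟨fun h => h.subst_eq _, fun h => ?_⟩, EJ.alpha_subst_id φ⟩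
  exact (EJ.alpha_subst_id φ).symm.trans (h ▸ EJ.alpha_subst_id ψ)
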